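/- Let s, t, z ≥ 1 be integers, let V ⊆ [t], and let B⁽¹⁾, …, B⁽ᶻ⁾ : [s] → [t] be functions such that: (a) for each i ∈ [t], the cardinality aᵢ := |(B⁽ˡ⁾)⁻¹(i)| is the same for all ℓ ∈ [z]; and (b) for every f : V → [z], f is constant if and only if the sets (B^{(f(i))})⁻¹(i), for i ∈ V, are pairwise disjoint. For each i ∈ V let X_i ⊆ [z] be nonempty, and set X_i := [z] for i ∉ V. Let vᵢ be the mild-desires valuation for the family 𝒻ᵢ := {(B⁽ˡ⁾)⁻¹(i) : ℓ ∈ X_i} (all of whose members have size aᵢ). Then the maximum of Σ_{i=1}^t vᵢ(Aᵢ) over all allocations (A₁,…,A_t) of the s items to the t bidders equals 2s if and only if ⋂_{i ∈ V} X_i ≠ ∅. -/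
import Mathlib

/-- The mild-desires valuation for a family `F` of sets, all of the same size `a`. -/
noncomputable def mildDesires {s : ℕ} (a : ℕ) (F : Finset (Finset (Fin s)))
    (G : Finset (Fin s)) : ℝ :=
  if G.card < a then 2 * (G.card : ℝ)
  else if G.card = a then (if G ∈ F then 2 * (a : ℝ) else 2 * (G.card : ℝ) - 1)
  else 2 * (a : ℝ)

lemma mildDesires_le {s : ℕ} (a : ℕ) (F : Finset (Finset (Fin s))) (G : Finset (Fin s)) :
    mildDesires a F G ≤ 2 * (G.card : ℝ) := by
  unfold mildDesires
  split_ifs with h1 h2 h3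
  · linarith
  · simp [h2]
  · linarith
  · have : a ≤ G.card := by omega
    have : (a : ℝ) ≤ G.card := by exact_mod_cast this
    linarith

lemma mildDesires_eq_self {s : ℕ} (a : ℕ) (F : Finset (Finset (Fin s))) (G : Finset (Fin s))
    (h : mildDesires a F G = 2 * (G.card : ℝ)) : G.card ≤ a ∧ (G.card = a → G ∈ F) := by
  unfold mildDesires at h
  split_ifs at h with h1 h2 h3
  · exact ⟨le_of_lt h1, fun hc => absurd hc (Nat.ne_of_lt h1)⟩
  · exact ⟨le_of_eq h2, fun _ => h3⟩
  · exfalso; rw [h2] at h; linarith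
  · exfalso
    have hlt : a < G.card := by omega
    have : (a : ℝ) < G.card := by exact_mod_cast hlt
    linarith

/-- set-disjointness embedding: with allocations `B⁽¹⁾, …, B⁽ᶻ⁾` satisfying the
structure of Claim 5.6 and mild-desires bidders for `{(B⁽ˡ⁾)⁻¹(i) : ℓ ∈ X_i}`, the maximum
welfare over all allocations equals `2s` iff `⋂_{i ∈ V} X_i ≠ ∅`. -/
theorem set_disjointness_embedding
    (s t z : ℕ) (hs : 1 ≤ s) (ht : 1 ≤ t) (hz : 1 ≤ z)
    (V : Finset (Fin t)) (B : Fin z → Fin s → Fin t)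
    (a : Fin t → ℕ)
    (ha : ∀ (i : Fin t) (ℓ : Fin z), (Finset.univ.filter fun x => B ℓ x = i).card = a i)
    (hstruct : ∀ f : Fin t → Fin z,
      ((∀ i ∈ V, ∀ i' ∈ V, f i = f i') ↔
        (↑V : Set (Fin t)).Pairwise fun i i' =>
          Disjoint (Finset.univ.filter fun x => B (f i) x = i)
            (Finset.univ.filter fun x => B (f i') x = i')))
    (X : Fin t → Finset (Fin z))
    (hXne : ∀ i ∈ V, (X i).Nonempty)
    (hXout : ∀ i ∉ V, X i = Finset.univ) :
    (IsGreatest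
      {w : ℝ | ∃ A : Fin t → Finset (Fin s),
        (∀ i j : Fin t, i ≠ j → Disjoint (A i) (A j)) ∧
        w = ∑ i : Fin t,
          mildDesires (a i) ((X i).image fun ℓ => Finset.univ.filter fun x => B ℓ x = i) (A i)}
      (2 * (s : ℝ)))
    ↔ ∃ ℓ : Fin z, ∀ i ∈ V, ℓ ∈ X i := by
  classical
  set S : Fin z → Fin t → Finset (Fin s) :=
    fun ℓ i => Finset.univ.filter fun x => B ℓ x = i with hS
  -- the fibers of any single B ℓ sum to s
  have hsum_a : ∀ ℓ : Fin z, ∑ i : Fin t, a i = s := by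
    intro ℓ
    have := Finset.card_eq_sum_card_fiberwise
      (f := B ℓ) (s := Finset.univ) (t := Finset.univ) (fun x _ => Finset.mem_univ _)
    simp only [Finset.card_univ, Fintype.card_fin] at this
    rw [this]
    exact Finset.sum_congr rfl fun i _ => (ha i _).symm
  obtain ⟨ℓ₀⟩ : Nonempty (Fin z) := ⟨⟨0, hz⟩⟩
  have hsum : ∑ i : Fin t, a i = s := hsum_a ℓ₀
  -- sum of cards of pairwise disjoint family ≤ s
  have hcard_sum : ∀ A : Fin t → Finset (Fin s),
      (∀ i j : Fin t, i ≠ j → Disjoint (A i) (A j)) → ∑ i : Fin t, (A i).card ≤ s := by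
    intro A hd
    rw [← Finset.card_biUnion (fun i _ j _ hij => hd i j hij)]
    simpa using (Finset.card_le_card (Finset.subset_univ (Finset.univ.biUnion A)))
  -- upper bound always holds
  have hub : ∀ w ∈ {w : ℝ | ∃ A : Fin t → Finset (Fin s),
        (∀ i j : Fin t, i ≠ j → Disjoint (A i) (A j)) ∧
        w = ∑ i : Fin t,
          mildDesires (a i) ((X i).image fun ℓ => S ℓ i) (A i)}, w ≤ 2 * (s : ℝ) := by
    rintro w ⟨A, hd, rfl⟩
    calc ∑ i : Fin t, mildDesires (a i) ((X i).image fun ℓ => S ℓ i) (A i)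
        ≤ ∑ i : Fin t, 2 * ((A i).card : ℝ) :=
          Finset.sum_le_sum fun i _ => mildDesires_le _ _ _
      _ = 2 * ((∑ i : Fin t, (A i).card : ℕ) : ℝ) := by
          push_cast; rw [Finset.mul_sum]
      _ ≤ 2 * (s : ℝ) := by
          have := hcard_sum A hd
          have : ((∑ i : Fin t, (A i).card : ℕ) : ℝ) ≤ s := by exact_mod_cast this
          linarith
  constructor
  · rintro ⟨hmem, -⟩
    obtain ⟨A, hd, hw⟩ := hmem
    -- each term equals 2 * card
    have hterm : ∀ i : Fin t,
        mildDesires (a i) ((X i).image fun ℓ => S ℓ i) (A i) = 2 * ((A i).card : ℝ) := by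
      have hle : ∀ i ∈ Finset.univ,
          mildDesires (a i) ((X i).image fun ℓ => S ℓ i) (A i) ≤ 2 * ((A i).card : ℝ) :=
        fun i _ => mildDesires_le _ _ _
      have h1 : ∑ i : Fin t, mildDesires (a i) ((X i).image fun ℓ => S ℓ i) (A i)
          = 2 * (s : ℝ) := hw.symm
      have h2 : ∑ i : Fin t, 2 * ((A i).card : ℝ) ≤ 2 * (s : ℝ) := by
        have := hcard_sum A hd
        have h3 : ((∑ i : Fin t, (A i).card : ℕ) : ℝ) ≤ s := by exact_mod_cast this
        push_cast at h3 ⊢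
        rw [← Finset.mul_sum]; linarith
      have heq : ∑ i : Fin t, mildDesires (a i) ((X i).image fun ℓ => S ℓ i) (A i)
          = ∑ i : Fin t, 2 * ((A i).card : ℝ) :=
        le_antisymm (Finset.sum_le_sum hle) (by rw [h1]; exact h2)
      intro i
      exact (Finset.sum_eq_sum_iff_of_le hle).mp heq i (Finset.mem_univ i)
    have hcards_le : ∀ i : Fin t, (A i).card ≤ a i :=
      fun i => (mildDesires_eq_self _ _ _ (hterm i)).1
    -- sum of cards equals s
    have hcards_sum : ∑ i : Fin t, (A i).card = s := by
      have e1 : (2:ℝ) * s = ∑ i : Fin t, 2 * ((A i).card : ℝ) := by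
        rw [hw]; exact Finset.sum_congr rfl fun i _ => hterm i
      have e2 : ∑ i : Fin t, 2 * ((A i).card : ℝ)
          = 2 * ((∑ i : Fin t, (A i).card : ℕ) : ℝ) := by
        push_cast; rw [Finset.mul_sum]
      have : ((∑ i : Fin t, (A i).card : ℕ) : ℝ) = s := by linarith
      exact_mod_cast this
    have hcards : ∀ i : Fin t, (A i).card = a i := by
      have h := (Finset.sum_eq_sum_iff_of_le (fun i _ => hcards_le i)).mp
        (by rw [hcards_sum, hsum])
      exact fun i => h i (Finset.mem_univ i)
    have hmemF : ∀ i : Fin t, A i ∈ (X i).image fun ℓ => S ℓ i :=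
      fun i => (mildDesires_eq_self _ _ _ (hterm i)).2 (hcards i)
    -- choose ℓ_i
    have hchoose : ∀ i : Fin t, ∃ ℓ ∈ X i, S ℓ i = A i := by
      intro i
      simpa [Finset.mem_image] using hmemF i
    choose f hfX hfS using hchoose
    have hconst : ∀ i ∈ V, ∀ i' ∈ V, f i = f i' := by
      apply (hstruct f).mpr
      intro i hi i' hi' hne
      show Disjoint (S (f i) i) (S (f i') i')
      rw [hfS i, hfS i']
      exact hd i i' hne
    rcases V.eq_empty_or_nonempty with hV | ⟨i₀, hi₀⟩
    · exact ⟨ℓ₀, by simp [hV]⟩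
    · exact ⟨f i₀, fun i hi => by rw [hconst i₀ hi₀ i hi]; exact hfX i⟩
  · rintro ⟨ℓ, hℓ⟩
    constructor
    · refine ⟨fun i => S ℓ i, ?_, ?_⟩
      · intro i j hij
        simp only [hS, Finset.disjoint_filter_filter']
        rw [Finset.disjoint_left]
        intro x hx hx'
        simp only [hS, Finset.mem_filter] at hx hx'
        exact hij (hx.2 ▸ hx'.2 ▸ rfl)
      · have hterm : ∀ i : Fin t,
            mildDesires (a i) ((X i).image fun ℓ' => S ℓ' i) (S ℓ i) = 2 * (a i : ℝ) := by
          intro i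
          have hc : (S ℓ i).card = a i := ha i ℓ
          have hmF : S ℓ i ∈ (X i).image fun ℓ' => S ℓ' i := by
            apply Finset.mem_image_of_mem
            by_cases hiV : i ∈ V
            · exact hℓ i hiV
            · rw [hXout i hiV]; exact Finset.mem_univ _
          unfold mildDesires
          rw [if_neg (by omega), if_pos hc, if_pos hmF]
        rw [Finset.sum_congr rfl fun i _ => hterm i, ← Finset.mul_sum]
        rw [show ∑ i : Fin t, (a i : ℝ) = ((∑ i : Fin t, a i : ℕ) : ℝ) by push_cast; ring]
        rw [hsum]
    · exact hub
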